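/- Let M be a symmetric real n × n matrix, K a symmetric positive semidefinite real n × n matrix, ε ∈ ℝ, d ≥ 0 a real scalar, s ∈ ℝⁿ, and G : ℝⁿ → ℝ differentiable. Let φ : ℝ → ℝⁿ be differentiable and μ : ℝ → ℝⁿ satisfy, for all t: (i) M φ'(t) = s − d K μ(t); (ii) M μ(t) = ∇G(φ(t)) + ε² K φ(t). Then the discrete energy H(t) = G(φ(t)) + (ε²/2) ⟨φ(t), K φ(t)⟩ is differentiable with H'(t) = ⟨μ(t), s⟩ − d ⟨μ(t), K μ(t)⟩ ≤ ⟨μ(t), s⟩ for all t; in particular, if s = 0 then H is nonincreasing. (Algebraic form of the energy dissipation law for the standard mixed continuous Galerkin semidiscretization of the Cahn–Hilliard equation: dH_CG/dt = −‖√d ∇μ_h‖² + ⟨μ_h, S⟩.) -/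

import Mathlib

/-!
Differentiating `H` along the flow gives `H' = ⟨∇G(φ) + ε² K φ, φ'⟩` (the symmetry of `K` merges the
two terms of the quadratic part), which by (ii) is `⟨M μ, φ'⟩`. Symmetry of `M` moves `M` across to
`φ'`, and (i) turns this into `⟨μ, s⟩ − d ⟨μ, K μ⟩`. Positive semidefiniteness of `K` and `d ≥ 0`
give the inequality, and for `s = 0` a nonpositive derivative makes `H` antitone.
-/

open Matrix

variable {ι : Type*} [Fintype ι]

theorem Matrix.IsSymm.dotProduct_mulVec_comm {R : Type*} [CommSemiring R] {A : Matrix ι ι R}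
    (hA : A.IsSymm) (x y : ι → R) :
    x ⬝ᵥ (A *ᵥ y) = (A *ᵥ x) ⬝ᵥ y := by
  rw [dotProduct_mulVec, ← mulVec_transpose, hA.eq]

theorem ContinuousLinearMap.apply_eq_dotProduct [DecidableEq ι] (L : (ι → ℝ) →L[ℝ] ℝ)
    (x : ι → ℝ) : L x = (fun i => L (Pi.single i 1)) ⬝ᵥ x := by
  conv_lhs => rw [pi_eq_sum_univ' x]
  simp [dotProduct, mul_comm]

section Deriv

variable {f g : ℝ → ι → ℝ} {f' g' : ι → ℝ} {t : ℝ}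

theorem HasDerivAt.dotProduct (hf : HasDerivAt f f' t) (hg : HasDerivAt g g' t) :
    HasDerivAt (fun τ => f τ ⬝ᵥ g τ) (f' ⬝ᵥ g t + f t ⬝ᵥ g') t := by
  simp only [_root_.dotProduct, ← Finset.sum_add_distrib]
  exact HasDerivAt.fun_sum fun i _ =>
    (hasDerivAt_pi.mp hf i).mul (hasDerivAt_pi.mp hg i)

theorem HasDerivAt.mulVec (A : Matrix ι ι ℝ) (hf : HasDerivAt f f' t) :
    HasDerivAt (fun τ => A *ᵥ f τ) (A *ᵥ f') t :=
  (LinearMap.toContinuousLinearMap (mulVecLin A)).hasFDerivAt.comp_hasDerivAt t hf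

theorem HasDerivAt.dotProduct_mulVec_self {K : Matrix ι ι ℝ} (hK : K.IsSymm)
    (hf : HasDerivAt f f' t) :
    HasDerivAt (fun τ => f τ ⬝ᵥ (K *ᵥ f τ)) (2 * ((K *ᵥ f t) ⬝ᵥ f')) t := by
  refine (hf.dotProduct (hf.mulVec K)).congr_deriv ?_
  rw [hK.dotProduct_mulVec_comm (f t) f', dotProduct_comm f' (K *ᵥ f t)]
  ring

end Deriv

section CahnHilliard

variable {M K : Matrix ι ι ℝ} {ε d : ℝ} {s : ι → ℝ} {G : (ι → ℝ) → ℝ}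
  {φ : ℝ → ι → ℝ} {φ' μ : ι → ℝ} {t : ℝ}

theorem hasDerivAt_energy [DecidableEq ι] (hK : K.IsSymm) (hG : DifferentiableAt ℝ G (φ t))
    (hφ : HasDerivAt φ φ' t) :
    HasDerivAt (fun τ => G (φ τ) + ε ^ 2 / 2 * φ τ ⬝ᵥ (K *ᵥ φ τ))
      (((fun i => fderiv ℝ G (φ t) (Pi.single i 1)) + ε ^ 2 • (K *ᵥ φ t)) ⬝ᵥ φ') t := by
  have hGφ : HasDerivAt (fun τ => G (φ τ)) (fderiv ℝ G (φ t) φ') t :=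
    hG.hasFDerivAt.comp_hasDerivAt t hφ
  refine (hGφ.add ((hφ.dotProduct_mulVec_self hK).const_mul (ε ^ 2 / 2))).congr_deriv ?_
  rw [add_dotProduct, smul_dotProduct, smul_eq_mul, ← ContinuousLinearMap.apply_eq_dotProduct]
  ring

theorem chemicalPotential_dotProduct_eq (hM : M.IsSymm) (h1 : M *ᵥ φ' = s - d • (K *ᵥ μ)) :
    (M *ᵥ μ) ⬝ᵥ φ' = μ ⬝ᵥ s - d * μ ⬝ᵥ (K *ᵥ μ) := by
  rw [← hM.dotProduct_mulVec_comm, h1, dotProduct_sub, dotProduct_smul, smul_eq_mul]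

end CahnHilliard

/-- **Energy dissipation for the mixed CG semidiscretization of Cahn–Hilliard
(algebraic form).** Given (i) `M φ'(t) = s − d K μ(t)` and
(ii) `M μ(t) = ∇G(φ(t)) + ε² K φ(t)` with `M` symmetric, `K` symmetric positive
semidefinite and `d ≥ 0`, the discrete energy `H(t) = G(φ(t)) + (ε²/2)⟨φ(t), K φ(t)⟩`
satisfies `H'(t) = ⟨μ, s⟩ − d⟨μ, K μ⟩ ≤ ⟨μ, s⟩`; if `s = 0` then `H` is nonincreasing. -/
theorem stmt_12 (n : ℕ) (M K : Matrix (Fin n) (Fin n) ℝ)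
    (hM : M.IsSymm) (hK : K.PosSemidef) (ε : ℝ) (d : ℝ) (hd : 0 ≤ d)
    (s : Fin n → ℝ) (G : (Fin n → ℝ) → ℝ) (hG : Differentiable ℝ G)
    (φ : ℝ → Fin n → ℝ) (hφ : Differentiable ℝ φ) (μ : ℝ → Fin n → ℝ)
    (h1 : ∀ t, M *ᵥ deriv φ t = s - d • (K *ᵥ μ t))
    (h2 : ∀ t, M *ᵥ μ t
      = (fun i => fderiv ℝ G (φ t) (Pi.single i 1)) + ε^2 • (K *ᵥ φ t)) :
    (∀ t : ℝ,
      HasDerivAt (fun τ => G (φ τ) + ε^2/2 * dotProduct (φ τ) (K *ᵥ φ τ))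
        (dotProduct (μ t) s - d * dotProduct (μ t) (K *ᵥ μ t)) t
      ∧ dotProduct (μ t) s - d * dotProduct (μ t) (K *ᵥ μ t) ≤ dotProduct (μ t) s)
    ∧ (s = 0 →
        Antitone (fun t => G (φ t) + ε^2/2 * dotProduct (φ t) (K *ᵥ φ t))) := by
  have hKs : K.IsSymm := isHermitian_iff_isSymm.mp hK.1
  have hdiss : ∀ t, 0 ≤ d * μ t ⬝ᵥ (K *ᵥ μ t) := fun t =>
    mul_nonneg hd (by simpa using hK.dotProduct_mulVec_nonneg (μ t))
  have hH : ∀ t, HasDerivAt (fun τ => G (φ τ) + ε ^ 2 / 2 * φ τ ⬝ᵥ (K *ᵥ φ τ))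
      (μ t ⬝ᵥ s - d * μ t ⬝ᵥ (K *ᵥ μ t)) t := fun t => by
    rw [← chemicalPotential_dotProduct_eq hM (h1 t), h2 t]
    exact hasDerivAt_energy hKs (hG _) (hφ t).hasDerivAt
  refine ⟨fun t => ⟨hH t, by linarith [hdiss t]⟩, fun hs => ?_⟩
  refine antitone_of_hasDerivAt_nonpos hH fun t => ?_
  simp only [hs, dotProduct_zero, Pi.zero_apply]
  linarith [hdiss t]
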